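/- Let (Σ,ω) be a compact Riemann surface with constant scalar curvature, L a holomorphic line bundle with hermite–Einstein metric h (i.e. iΛ_ω F_h = 2π c₁(L)/Vol(Σ)), and φ ∈ H⁰(L). Set ω' = e^{2u}ω and h' = e^{2f}h for smooth functions u, f. Then (ω',h') satisfies the gravitating vortex equations if and only if (u,f) solves the system: Δf + (1/2)e^{2u}(e^{2f}|φ|² − τ) = −2π c₁(L)/Vol(Σ) and Δ(u + α e^{2f}|φ|² − 2ατ f) + c(1 − e^{2u}) = 0, where c = 2π(χ(Σ) − 2ατ c₁(L))/Vol(Σ). -/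
import Mathlib


/-- Conformal-change (Kazdan–Warner type) reformulation of the
gravitating vortex equations.  `(Σ,ω)` has constant scalar curvature
(`S_ω = 2πχ/V`), `h` is hermite–Einstein (`iΛ_ω F_h = 2πc₁/V`), and we set
`ω' = e^{2u}ω`, `h' = e^{2f}h`.  Using the conformal identities
`e^{2u} S_{ω'} = S_ω + Δu`, `e^{2u} iΛ_{ω'}F_{h'} = iΛ_ω F_h + Δf`,
`Δ_{ω'} = e^{-2u}Δ`, the pair `(ω',h')` satisfies the gravitating vortex
equations iff `(u,f)` solves the Kazdan–Warner type system. -/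
theorem stmt_3 {Srf : Type*} (Δ : (Srf → ℝ) → (Srf → ℝ))
    (hadd : ∀ v w : Srf → ℝ, Δ (v + w) = Δ v + Δ w)
    (hsmul : ∀ (r : ℝ) (v : Srf → ℝ), Δ (r • v) = r • Δ v)
    (hconst : ∀ r : ℝ, Δ (fun _ => r) = 0)
    (α τ χ c₁ V : ℝ) (hV : 0 < V) (hτ : 0 < τ)
    (phi2 u f : Srf → ℝ) (hphi2 : ∀ x, 0 ≤ phi2 x)
    (c : ℝ) (hc : c = 2 * Real.pi * (χ - 2 * α * τ * c₁) / V) :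
    -- data of (ω', h') in terms of (u, f) and the base csc/HE pair
    (∀ x,
        (Real.exp (-2 * u x) * (2 * Real.pi * c₁ / V + Δ f x)) +
          (1 / 2) * (Real.exp (2 * f x) * phi2 x - τ) = 0) ∧
      (∀ x,
        (Real.exp (-2 * u x) * (2 * Real.pi * χ / V + Δ u x)) +
          α * (Real.exp (-2 * u x) *
                Δ (fun y => Real.exp (2 * f y) * phi2 y - τ) x
              + τ * (Real.exp (2 * f x) * phi2 x - τ)) = c)
    ↔
    (∀ x,
        Δ f x + (1 / 2) * Real.exp (2 * u x) *
          (Real.exp (2 * f x) * phi2 x - τ) = -(2 * Real.pi * c₁ / V)) ∧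
      (∀ x,
        Δ (fun y => u y + α * Real.exp (2 * f y) * phi2 y - 2 * α * τ * f y) x
          + c * (1 - Real.exp (2 * u x)) = 0) := by

  have hΔsub : Δ (fun y => Real.exp (2 * f y) * phi2 y - τ)
      = Δ (fun y => Real.exp (2 * f y) * phi2 y) := by
    have h : (fun y => Real.exp (2 * f y) * phi2 y - τ)
        = (fun y => Real.exp (2 * f y) * phi2 y) + (fun _ => -τ) := by
      funext y; simp [sub_eq_add_neg]
    rw [h, hadd, hconst, add_zero]
  have hΔcomb : ∀ x, Δ (fun y => u y + α * Real.exp (2 * f y) * phi2 y - 2 * α * τ * f y) x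
      = Δ u x + α * Δ (fun y => Real.exp (2 * f y) * phi2 y) x - 2 * α * τ * Δ f x := by
    intro x
    have h : (fun y => u y + α * Real.exp (2 * f y) * phi2 y - 2 * α * τ * f y)
        = u + α • (fun y => Real.exp (2 * f y) * phi2 y) + (-(2 * α * τ)) • f := by
      funext y; simp [smul_eq_mul]; ring
    rw [h, hadd, hadd, hsmul, hsmul]
    simp [smul_eq_mul]; ring
  have hEp : ∀ x, Real.exp (-2 * u x) * Real.exp (2 * u x) = 1 := by
    intro x
    rw [← Real.exp_add]
    norm_num
  subst hc
  constructor
  · rintro ⟨h1, h2⟩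
    have eq1 : ∀ x, Δ f x + (1 / 2) * Real.exp (2 * u x) *
        (Real.exp (2 * f x) * phi2 x - τ) = -(2 * Real.pi * c₁ / V) := by
      intro x
      linear_combination Real.exp (2 * u x) * h1 x
        - (2 * Real.pi * c₁ / V + Δ f x) * hEp x
    refine ⟨eq1, fun x => ?_⟩
    have h2x := h2 x
    rw [hΔsub] at h2x
    rw [hΔcomb]
    linear_combination Real.exp (2 * u x) * h2x - 2 * α * τ * eq1 x
      - (2 * Real.pi * χ / V + Δ u x
          + α * Δ (fun y => Real.exp (2 * f y) * phi2 y) x) * hEp x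
  · rintro ⟨e1, e2⟩
    constructor
    · intro x
      linear_combination Real.exp (-2 * u x) * e1 x
        - (1 / 2) * (Real.exp (2 * f x) * phi2 x - τ) * hEp x
    · intro x
      have e2x := e2 x
      rw [hΔcomb] at e2x
      rw [hΔsub]
      linear_combination Real.exp (-2 * u x) * e2x
        + 2 * α * τ * Real.exp (-2 * u x) * e1 x
        + (2 * Real.pi * (χ - 2 * α * τ * c₁) / V
            - α * τ * (Real.exp (2 * f x) * phi2 x - τ)) * hEp x
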